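/- For every nonnegative integer N, p(2N, 4, N) - p(2N - 1, 4, N) = p(N, 3) - p(N - 1, 3). -/

import Mathlib

/-- `pBdd n m N` is the number of partitions of `n` into at most `m` parts,
each part at most `N`; it is `0` for negative `n`. -/
noncomputable def pBdd (n : ℤ) (m N : ℕ) : ℕ :=
  if 0 ≤ n then
    Nat.card {π : Nat.Partition n.toNat //
      Multiset.card π.parts ≤ m ∧ ∀ i ∈ π.parts, i ≤ N}
  else 0

/-- `pAtMost n m` is the number of partitions of `n` into at most `m` parts;
it is `0` for negative `n`. -/
noncomputable def pAtMost (n : ℤ) (m : ℕ) : ℕ :=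
  if 0 ≤ n then
    Nat.card {π : Nat.Partition n.toNat // Multiset.card π.parts ≤ m}
  else 0

/-!
Read through conjugation, a partition of `n` in a `4 × N` box is a vector `(w, x, y, z)` of
multiplicities of the parts `4, 3, 2, 1` with `4w + 3x + 2y + z = n` and `w + x + y + z ≤ N`,
and a partition of `n` into at most three parts is a vector `(x, y, z)` with `3x + 2y + z = n`.
For `n = 2N`: when `z ≥ 1`, removing one part `1` leaves a box partition of `2N - 1` with at most
`N - 1` parts; when `z = 0`, `x` is even and `(x / 2, w, y)` is a partition of `N` into parts
at most `3`. For `n = 2N - 1`: the vectors with at most `N - 1` parts are the same set as before,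
and those with exactly `N` parts satisfy `3w + 2x + y = N - 1`. The common set cancels.
-/

open Multiset Function

theorem Multiset.filter_ne_zero_add_replicate (s : Multiset ℕ) :
    s.filter (· ≠ 0) + replicate (s.count 0) 0 = s := by
  rw [← filter_eq']
  simpa only [ne_eq, not_not] using s.filter_add_not (· ≠ 0)

theorem Multiset.exists_sorted_of_card_eq_three {s : Multiset ℕ} (hs : card s = 3) :
    ∃ a b c, a ≤ b ∧ b ≤ c ∧ s = ([a, b, c] : List ℕ) := by
  obtain ⟨a, b, c, hl⟩ := List.length_eq_three.1 ((length_sort (· ≤ ·)).trans hs)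
  have hsorted := pairwise_sort s (· ≤ ·)
  simp only [hl, List.pairwise_cons, List.mem_cons, List.not_mem_nil, or_false] at hsorted
  exact ⟨a, b, c, hsorted.1 b (.inl rfl), hsorted.2.1 c rfl, by rw [← hl, sort_eq]⟩

theorem Multiset.exists_sorted_of_card_eq_four {s : Multiset ℕ} (hs : card s = 4) :
    ∃ a b c d, a ≤ b ∧ b ≤ c ∧ c ≤ d ∧ s = ([a, b, c, d] : List ℕ) := by
  obtain ⟨a, b, c, d, hl⟩ := List.length_eq_four.1 ((length_sort (· ≤ ·)).trans hs)
  have hsorted := pairwise_sort s (· ≤ ·)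
  simp only [hl, List.pairwise_cons, List.mem_cons, List.not_mem_nil, or_false] at hsorted
  exact ⟨a, b, c, d, hsorted.1 b (.inl rfl), hsorted.2.1 c (.inl rfl), hsorted.2.2.1 d rfl,
    by rw [← hl, sort_eq]⟩

abbrev PaddedPartition (n m N : ℕ) : Type :=
  {s : Multiset ℕ // card s = m ∧ s.sum = n ∧ ∀ i ∈ s, i ≤ N}

def Nat.Partition.padEquiv (n m N : ℕ) :
    {π : n.Partition // card π.parts ≤ m ∧ ∀ i ∈ π.parts, i ≤ N} ≃
      PaddedPartition n m N where
  toFun π := ⟨π.1.parts + replicate (m - card π.1.parts) 0, by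
    obtain ⟨π, hcard, hle⟩ := π
    refine ⟨by simp; omega, by simp [π.parts_sum], ?_⟩
    simp only [mem_add, mem_replicate]
    rintro i (hi | ⟨-, rfl⟩)
    exacts [hle i hi, N.zero_le]⟩
  invFun s := ⟨⟨s.1.filter (· ≠ 0),
      fun hi => Nat.pos_of_ne_zero (of_mem_filter (p := (· ≠ 0)) hi), by
      conv_rhs => rw [← s.2.2.1, ← s.1.filter_ne_zero_add_replicate]
      simp⟩, by
    obtain ⟨s, hcard, -, hle⟩ := s
    exact ⟨(card_le_card (filter_le _ s)).trans hcard.le,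
      fun i hi => hle i (mem_of_mem_filter hi)⟩⟩
  left_inv := by
    rintro ⟨π, -⟩
    ext1
    ext1
    simp [filter_add, filter_eq_self.2 fun i hi => (π.parts_pos hi).ne', mem_replicate]
  right_inv := by
    rintro ⟨s, hcard, -⟩
    ext1
    have := congrArg card s.filter_ne_zero_add_replicate
    simp only [card_add, card_replicate] at this
    dsimp only
    rw [show m - card (s.filter (· ≠ 0)) = s.count 0 by omega, s.filter_ne_zero_add_replicate]

/-- `(w, x, y, z)` are the gaps `a, b - a, c - b, d - c` of the sorted parts `a ≤ b ≤ c ≤ d`. -/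
abbrev ConjugateCounts4 (n N : ℕ) : Type :=
  {q : ℕ × ℕ × ℕ × ℕ // 4 * q.1 + 3 * q.2.1 + 2 * q.2.2.1 + q.2.2.2 = n ∧
    q.1 + q.2.1 + q.2.2.1 + q.2.2.2 ≤ N}

abbrev ConjugateCounts3 (n : ℕ) : Type :=
  {t : ℕ × ℕ × ℕ // 3 * t.1 + 2 * t.2.1 + t.2.2 = n}

def ConjugateCounts4.toPadded {n N : ℕ} (q : ConjugateCounts4 n N) : PaddedPartition n 4 N :=
  ⟨↑[q.1.1, q.1.1 + q.1.2.1, q.1.1 + q.1.2.1 + q.1.2.2.1,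
      q.1.1 + q.1.2.1 + q.1.2.2.1 + q.1.2.2.2], by
    obtain ⟨⟨w, x, y, z⟩, hsum, hle⟩ := q
    dsimp only at hsum hle ⊢
    refine ⟨by simp, by simp; omega, ?_⟩
    simp only [mem_coe, List.mem_cons, List.not_mem_nil, or_false]
    rintro i (rfl | rfl | rfl | rfl) <;> omega⟩

theorem ConjugateCounts4.toPadded_bijective (n N : ℕ) :
    Bijective (ConjugateCounts4.toPadded (n := n) (N := N)) := by
  constructor
  · rintro ⟨⟨w, x, y, z⟩, _⟩ ⟨⟨w', x', y', z'⟩, _⟩ heq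
    have := (coe_eq_coe.1 (congrArg Subtype.val heq)).eq_of_pairwise' (r := (· ≤ ·))
      (by simp; omega) (by simp; omega)
    simp only [List.cons.injEq, and_true] at this
    ext <;> dsimp only <;> omega
  · rintro ⟨s, hcard, hsum, hle⟩
    obtain ⟨a, b, c, d, hab, hbc, hcd, rfl⟩ := exists_sorted_of_card_eq_four hcard
    simp only [sum_coe, List.sum_cons, List.sum_nil] at hsum
    have hd : d ≤ N := hle d (by simp)
    refine ⟨⟨(a, b - a, c - b, d - c), by dsimp only; omega, by dsimp only; omega⟩, ?_⟩
    ext1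
    simp only [ConjugateCounts4.toPadded]
    congr 1
    simp only [List.cons.injEq, and_true, true_and]
    omega

def ConjugateCounts3.toPadded {n : ℕ} (t : ConjugateCounts3 n) : PaddedPartition n 3 n :=
  ⟨↑[t.1.1, t.1.1 + t.1.2.1, t.1.1 + t.1.2.1 + t.1.2.2], by
    obtain ⟨⟨x, y, z⟩, hsum⟩ := t
    dsimp only at hsum ⊢
    refine ⟨by simp, by simp; omega, ?_⟩
    simp only [mem_coe, List.mem_cons, List.not_mem_nil, or_false]
    rintro i (rfl | rfl | rfl) <;> omega⟩

theorem ConjugateCounts3.toPadded_bijective (n : ℕ) :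
    Bijective (ConjugateCounts3.toPadded (n := n)) := by
  constructor
  · rintro ⟨⟨x, y, z⟩, _⟩ ⟨⟨x', y', z'⟩, _⟩ heq
    have := (coe_eq_coe.1 (congrArg Subtype.val heq)).eq_of_pairwise' (r := (· ≤ ·))
      (by simp; omega) (by simp; omega)
    simp only [List.cons.injEq, and_true] at this
    ext <;> dsimp only <;> omega
  · rintro ⟨s, hcard, hsum, -⟩
    obtain ⟨a, b, c, hab, hbc, rfl⟩ := exists_sorted_of_card_eq_three hcard
    simp only [sum_coe, List.sum_cons, List.sum_nil] at hsum
    refine ⟨⟨(a, b - a, c - b), by dsimp only; omega⟩, ?_⟩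
    ext1
    simp only [ConjugateCounts3.toPadded]
    congr 1
    simp only [List.cons.injEq, and_true, true_and]
    omega

theorem pBdd_natCast (n m N : ℕ) : pBdd n m N = Nat.card (PaddedPartition n m N) := by
  rw [pBdd, if_pos (Int.natCast_nonneg n), Int.toNat_natCast]
  exact Nat.card_congr (Nat.Partition.padEquiv n m N)

theorem pAtMost_natCast_eq_pBdd (n m : ℕ) : pAtMost n m = pBdd n m n := by
  rw [pAtMost, pBdd, if_pos (Int.natCast_nonneg n), if_pos (Int.natCast_nonneg n),
    Int.toNat_natCast]
  refine Nat.card_congr (Equiv.subtypeEquivRight fun π => ?_)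
  exact (and_iff_left_of_imp fun _ i hi => π.parts_sum ▸ le_sum_of_mem hi).symm

instance (n m N : ℕ) : Finite (PaddedPartition n m N) :=
  .of_equiv _ (Nat.Partition.padEquiv n m N)

instance (n N : ℕ) : Finite (ConjugateCounts4 n N) :=
  .of_injective _ (ConjugateCounts4.toPadded_bijective n N).1

instance (n : ℕ) : Finite (ConjugateCounts3 n) :=
  .of_injective _ (ConjugateCounts3.toPadded_bijective n).1

theorem pBdd_natCast_four (n N : ℕ) : pBdd n 4 N = Nat.card (ConjugateCounts4 n N) := by
  rw [pBdd_natCast, Nat.card_eq_of_bijective _ (ConjugateCounts4.toPadded_bijective n N)]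

theorem pAtMost_natCast_three (n : ℕ) : pAtMost n 3 = Nat.card (ConjugateCounts3 n) := by
  rw [pAtMost_natCast_eq_pBdd, pBdd_natCast,
    Nat.card_eq_of_bijective _ (ConjugateCounts3.toPadded_bijective n)]

theorem card_conjugateCounts4_even (M : ℕ) :
    Nat.card (ConjugateCounts4 (2 * M + 2) (M + 1)) =
      Nat.card (ConjugateCounts3 (M + 1)) + Nat.card (ConjugateCounts4 (2 * M + 1) M) := by
  rw [← Nat.card_sum]
  refine (Nat.card_eq_of_bijective (Sum.elim
    (fun t => ⟨(t.1.2.1, 2 * t.1.1, t.1.2.2, 0), by have := t.2; dsimp only at this ⊢; omega⟩)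
    (fun q => ⟨(q.1.1, q.1.2.1, q.1.2.2.1, q.1.2.2.2 + 1),
      by have := q.2; dsimp only at this ⊢; omega⟩)) ⟨?_, ?_⟩).symm
  · rintro (⟨⟨a, b, c⟩, h⟩ | ⟨⟨w, x, y, z⟩, h⟩)
      (⟨⟨a', b', c'⟩, h'⟩ | ⟨⟨w', x', y', z'⟩, h'⟩) heq <;>
      simp only [Sum.elim_inl, Sum.elim_inr, Subtype.mk.injEq, Prod.mk.injEq, Sum.inl.injEq,
        Sum.inr.injEq, reduceCtorEq] at h h' heq ⊢ <;> omega
  · rintro ⟨⟨w, x, y, z⟩, hsum, hle⟩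
    dsimp only at hsum hle
    rcases Nat.eq_zero_or_pos z with rfl | hz
    · refine ⟨.inl ⟨(x / 2, w, y), by dsimp only; omega⟩, ?_⟩
      simp only [Sum.elim_inl, Subtype.mk.injEq, Prod.mk.injEq, true_and, and_true]
      omega
    · refine ⟨.inr ⟨(w, x, y, z - 1), by dsimp only; omega, by dsimp only; omega⟩, ?_⟩
      simp only [Sum.elim_inr, Subtype.mk.injEq, Prod.mk.injEq, true_and]
      omega

theorem card_conjugateCounts4_odd (M : ℕ) :
    Nat.card (ConjugateCounts4 (2 * M + 1) (M + 1)) =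
      Nat.card (ConjugateCounts4 (2 * M + 1) M) + Nat.card (ConjugateCounts3 M) := by
  rw [← Nat.card_sum]
  refine (Nat.card_eq_of_bijective (Sum.elim
    (fun q => ⟨q.1, by have := q.2; omega⟩)
    (fun t => ⟨(t.1.1, t.1.2.1, t.1.2.2, M + 1 - (t.1.1 + t.1.2.1 + t.1.2.2)),
      by have := t.2; dsimp only at this ⊢; omega⟩)) ⟨?_, ?_⟩).symm
  · rintro (⟨⟨w, x, y, z⟩, h⟩ | ⟨⟨a, b, c⟩, h⟩)
      (⟨⟨w', x', y', z'⟩, h'⟩ | ⟨⟨a', b', c'⟩, h'⟩) heq <;>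
      simp only [Sum.elim_inl, Sum.elim_inr, Subtype.mk.injEq, Prod.mk.injEq, Sum.inl.injEq,
        Sum.inr.injEq, reduceCtorEq] at h h' heq ⊢ <;> omega
  · rintro ⟨⟨w, x, y, z⟩, hsum, hle⟩
    dsimp only at hsum hle
    by_cases hN : w + x + y + z ≤ M
    · exact ⟨.inl ⟨(w, x, y, z), hsum, hN⟩, rfl⟩
    · refine ⟨.inr ⟨(w, x, y), by dsimp only; omega⟩, ?_⟩
      simp only [Sum.elim_inr, Subtype.mk.injEq, Prod.mk.injEq, true_and]
      omega

theorem stmt15 (N : ℕ) :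
    (pBdd (2 * (N : ℤ)) 4 N : ℤ) - pBdd (2 * (N : ℤ) - 1) 4 N =
      (pAtMost (N : ℤ) 3 : ℤ) - pAtMost ((N : ℤ) - 1) 3 := by
  rcases N with _ | M
  · simp [pBdd, pAtMost]
  · have h₁ : 2 * ((M + 1 : ℕ) : ℤ) = (2 * M + 2 : ℕ) := by push_cast; ring
    have h₂ : 2 * ((M + 1 : ℕ) : ℤ) - 1 = (2 * M + 1 : ℕ) := by push_cast; ring
    have h₃ : ((M + 1 : ℕ) : ℤ) - 1 = M := by push_cast; ring
    rw [h₂, h₁, h₃, pBdd_natCast_four, pBdd_natCast_four, pAtMost_natCast_three,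
      pAtMost_natCast_three, card_conjugateCounts4_even, card_conjugateCounts4_odd]
    push_cast
    ring
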